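/- Let M, N be natural numbers, let u, v : Fin N → EuclideanSpace ℝ (Fin M), let Δ ∈ EuclideanSpace ℝ (Fin M), and let R be an M×M real orthogonal matrix (RᵀR = 1) with vᵢ = R • (uᵢ − Δ) for every i. Suppose moreover that the pairwise difference vectors {uᵢ − uⱼ : i, j ∈ Fin N} span EuclideanSpace ℝ (Fin M). Then Δ is the unique vector x ∈ EuclideanSpace ℝ (Fin M) satisfying the full system of linear equations 2⟪uᵢ − uⱼ, x⟫ = ‖uᵢ‖² − ‖uⱼ‖² − ‖vᵢ‖² + ‖vⱼ‖² for all pairs i, j. -/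

import Mathlib

/-! Orthogonality of `R` gives `‖vᵢ‖ = ‖uᵢ - Δ‖`, and polarization turns the right-hand side of
the system into `2⟪uᵢ - uⱼ, Δ⟫`. So `x` solves the system iff `x - Δ` is orthogonal to every
difference `uᵢ - uⱼ`, hence to the whole space they span, i.e. iff `x = Δ`. -/

open scoped RealInnerProductSpace Matrix

theorem Matrix.norm_toLp_mulVec_of_transpose_mul_self_eq_one {n : Type*} [Fintype n]
    [DecidableEq n] {R : Matrix n n ℝ} (hR : Rᵀ * R = 1) (w : EuclideanSpace ℝ n) :
    ‖WithLp.toLp 2 (R *ᵥ w.ofLp)‖ = ‖w‖ := by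
  have hinner : ⟪WithLp.toLp 2 (R *ᵥ w.ofLp), WithLp.toLp 2 (R *ᵥ w.ofLp)⟫ = ⟪w, w⟫ := by
    simp only [EuclideanSpace.inner_eq_star_dotProduct, star_trivial]
    rw [Matrix.dotProduct_mulVec, ← Matrix.mulVec_transpose, Matrix.mulVec_mulVec, hR,
      Matrix.one_mulVec]
  rw [real_inner_self_eq_norm_sq, real_inner_self_eq_norm_sq] at hinner
  exact (sq_eq_sq₀ (norm_nonneg _) (norm_nonneg _)).mp hinner

theorem ext_inner_left_of_span_eq_top {𝕜 E : Type*} [RCLike 𝕜] [NormedAddCommGroup E]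
    [InnerProductSpace 𝕜 E] {s : Set E} (hs : Submodule.span 𝕜 s = ⊤) {x y : E}
    (h : ∀ w ∈ s, inner 𝕜 w x = inner 𝕜 w y) : x = y := by
  have horth : (innerₛₗ 𝕜).flip (x - y) = 0 := LinearMap.ext_on hs fun w hw => by
    simp [h w hw]
  rw [← sub_eq_zero, ← inner_self_eq_zero (𝕜 := 𝕜)]
  exact LinearMap.congr_fun horth (x - y)

theorem two_mul_real_inner_sub_left {E : Type*} [NormedAddCommGroup E] [InnerProductSpace ℝ E]
    (a b x : E) :
    2 * ⟪a - b, x⟫ = ‖a‖ ^ 2 - ‖b‖ ^ 2 - ‖a - x‖ ^ 2 + ‖b - x‖ ^ 2 := by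
  rw [norm_sub_sq_real, norm_sub_sq_real, inner_sub_left]
  ring

/-- Theorem 1 of the paper, stated coordinate-freely: if `vᵢ = R (uᵢ - Δ)`
with `R` orthogonal, and the pairwise differences `uᵢ - uⱼ` span the whole
space, then `Δ` is the unique solution of the linear system
`2⟪uᵢ - uⱼ, x⟫ = ‖uᵢ‖² - ‖uⱼ‖² - ‖vᵢ‖² + ‖vⱼ‖²` over all pairs `i, j`. -/
theorem shift_unique_solution_of_linear_system (M N : ℕ)
    (u v : Fin N → EuclideanSpace ℝ (Fin M))
    (Δ : EuclideanSpace ℝ (Fin M)) (R : Matrix (Fin M) (Fin M) ℝ)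
    (hR : Rᵀ * R = 1)
    (hv : ∀ i, v i = R.mulVec (u i - Δ))
    (hspan : Submodule.span ℝ
      (Set.range fun p : Fin N × Fin N => u p.1 - u p.2) = ⊤) :
    ∀ x : EuclideanSpace ℝ (Fin M),
      (∀ i j, 2 * ⟪u i - u j, x⟫
          = ‖u i‖ ^ 2 - ‖u j‖ ^ 2 - ‖v i‖ ^ 2 + ‖v j‖ ^ 2) ↔ x = Δ := by
  have hnorm : ∀ i, ‖v i‖ = ‖u i - Δ‖ := fun i => by
    rw [← Matrix.norm_toLp_mulVec_of_transpose_mul_self_eq_one hR (u i - Δ)]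
    exact congrArg _ (WithLp.ofLp_injective 2 (hv i))
  simp only [hnorm, ← two_mul_real_inner_sub_left]
  intro x
  constructor
  · intro hx
    refine ext_inner_left_of_span_eq_top hspan ?_
    rintro _ ⟨⟨i, j⟩, rfl⟩
    linarith [hx i j]
  · rintro rfl i j
    rfl
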